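/- Let n ∈ ℕ and q ∈ ℂ with q ≠ 0, and let Λ(q) be the diagonal (n+1)×(n+1) matrix with diagonal entries q^{-(n-r)r} for r = 0,…,n. Then σ₁(q,n)·Λ(q)·σ₂(q,n)·σ₁(q,n) = S(q) and σ₂(q,n)·σ₁(q,n)·Λ(q)·σ₂(q,n) = S(q). -/

import Mathlib

/-!
Let `P = (C(k,m)_q)` be the q-Pascal matrix, `Q = ((-1)^(k+m) q^C(k-m,2) C(k,m)_q)`,
`E = diag((-1)^k q^(-C(k,2)))` (`qPascal`, `qPascalInv`, `twist`) and `J` the reversal permutation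
matrix. Then `σ₁ = J P J`, `σ₂ = E P E⁻¹` and `S = E J`. Everything rests on the alternating sum
`∑_j (-1)^j q^C(j,2) C(a,j) C(N-j,m) = q^(a(N-m)) C(N-a,N-m)`, proved by induction on `a` through a
summation by parts. For `a = N` it says `Q P = 1`; for `a = n - k`, after reflecting the summation
index (which turns `Λ E` into a multiple of `J E⁻¹ J`), it says `σ₁ Λ σ₂ = E Q J`. Both relations
then collapse: `σ₁ Λ σ₂ · σ₁ = E Q J · J P J = E J` and `σ₂ · σ₁ Λ σ₂ = E P E⁻¹ · E Q J = E J`.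
-/

/-- The Gaussian ($q$-)binomial coefficient `C(n,k)_q`, defined by the recursion
`C(n+1,k)_q = C(n,k-1)_q + q^k * C(n,k)_q`, with `C(n,0)_q = C(n,n)_q = 1` and
`C(n,k)_q = 0` for `k > n`. -/
noncomputable def qBinom (q : ℂ) : ℕ → ℕ → ℂ
  | 0, 0 => 1
  | 0, _ + 1 => 0
  | _ + 1, 0 => 1
  | n + 1, k + 1 => qBinom q n k + q ^ (k + 1) * qBinom q n (k + 1)

/-- The matrix `σ₁(q,n)` with entries `σ₁(q,n)_{km} = C(n-k, n-m)_q`. -/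
noncomputable def sigma1 (q : ℂ) (n : ℕ) : Matrix (Fin (n + 1)) (Fin (n + 1)) ℂ :=
  fun k m => qBinom q (n - k.val) (n - m.val)

/-- The matrix `σ₂(q,n)` with entries
`σ₂(q,n)_{km} = (-1)^{k+m} q^{-(k-m)(k-m-1)/2} C(k,m)_{q⁻¹}` for `m ≤ k`, and `0` otherwise. -/
noncomputable def sigma2 (q : ℂ) (n : ℕ) : Matrix (Fin (n + 1)) (Fin (n + 1)) ℂ :=
  fun k m =>
    if m.val ≤ k.val then
      (-1 : ℂ) ^ (k.val + m.val) *
        q ^ (-(((k.val - m.val) * (k.val - m.val - 1) / 2 : ℕ) : ℤ)) *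
        qBinom q⁻¹ k.val m.val
    else 0

/-- The matrix `S(q)` with entries `S(q)_{km} = (-1)^k q^{-k(k-1)/2}` when `k+m = n`,
and `0` otherwise. -/
noncomputable def Smat (q : ℂ) (n : ℕ) : Matrix (Fin (n + 1)) (Fin (n + 1)) ℂ :=
  fun k m =>
    if k.val + m.val = n then (-1 : ℂ) ^ k.val * q ^ (-((k.val * (k.val - 1) / 2 : ℕ) : ℤ))
    else 0

/-- `A^♯`, the matrix with entries `(A^♯)_{ij} = A_{n-i, n-j}`. -/
noncomputable def msharp {n : ℕ} (A : Matrix (Fin (n + 1)) (Fin (n + 1)) ℂ) :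
    Matrix (Fin (n + 1)) (Fin (n + 1)) ℂ :=
  fun i j => A i.rev j.rev

open Finset

lemma Nat.choose_two_add (a b : ℕ) : (a + b).choose 2 = a.choose 2 + b.choose 2 + a * b := by
  induction b with
  | zero => simp
  | succ b ih =>
    rw [← add_assoc, Nat.choose_succ_succ', Nat.choose_succ_succ' b, ih]
    simp only [Nat.choose_one_right]
    ring

lemma neg_one_pow_mul_self {R : Type*} [Monoid R] [HasDistribNeg R] (i : ℕ) :
    (-1 : R) ^ i * (-1) ^ i = 1 := by
  rw [← pow_add]
  exact Even.neg_one_pow ⟨i, rfl⟩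

section Weights

variable {F : Type*} [Field F] {q : F}

lemma lambda_twist_weight (hq : q ≠ 0) (i j : ℕ) :
    q ^ (-((i * j : ℕ) : ℤ)) * ((-1) ^ j * q ^ (-(j.choose 2 : ℤ)))
      = (-1) ^ (i + j) * (q ^ (i + j).choose 2)⁻¹ * ((-1) ^ i * q ^ i.choose 2) := by
  have hsign : (-1 : F) ^ j = (-1) ^ (i + j) * (-1) ^ i := by
    rw [pow_add, mul_comm, ← mul_assoc, neg_one_pow_mul_self, one_mul]
  have hpow : (q ^ (i * j))⁻¹ * (q ^ j.choose 2)⁻¹ = (q ^ (i + j).choose 2)⁻¹ * q ^ i.choose 2 := by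
    rw [Nat.choose_two_add]
    field_simp
    ring
  simp only [zpow_neg, zpow_natCast, hsign]
  linear_combination (-1 : F) ^ (i + j) * (-1) ^ i * hpow

lemma twist_qPascalInv_twist_weight (hq : q ≠ 0) {n K M : ℕ} (hK : K ≤ n) (hM : M ≤ n)
    (hKM : n ≤ K + M) :
    (-1) ^ n * (q ^ n.choose 2)⁻¹ * q ^ ((n - K) * (n - M))
      = (-1) ^ K * q ^ (-(K.choose 2 : ℤ)) * ((-1) ^ (K + (n - M)) * q ^ (K - (n - M)).choose 2)
        * ((-1) ^ M * q ^ (-(M.choose 2 : ℤ))) := by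
  obtain ⟨a, rfl⟩ := Nat.exists_eq_add_of_le hK
  obtain ⟨c, rfl⟩ := Nat.exists_eq_add_of_le (by omega : a ≤ M)
  obtain ⟨b, rfl⟩ := Nat.exists_eq_add_of_le (by omega : c ≤ K)
  have hsign : (-1 : F) ^ (c + b) * (-1) ^ (c + b + b) * (-1) ^ (a + c) = (-1) ^ (c + b + a) := by
    rw [← pow_add, ← pow_add, show c + b + (c + b + b) + (a + c) = c + b + a + 2 * (b + c) by ring,
      pow_add, pow_mul, neg_one_sq, one_pow, mul_one]
  have hpow : (q ^ (c + b + a).choose 2)⁻¹ * q ^ (a * b)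
      = (q ^ (c + b).choose 2)⁻¹ * q ^ c.choose 2 * (q ^ (a + c).choose 2)⁻¹ := by
    simp only [Nat.choose_two_add]
    field_simp
    ring
  rw [show c + b + a - (c + b) = a by omega, show c + b + a - (a + c) = b by omega,
    show c + b - b = c by omega, ← hsign]
  simp only [zpow_neg, zpow_natCast]
  linear_combination (-1 : F) ^ (c + b) * (-1) ^ (c + b + b) * (-1) ^ (a + c) * hpow

end Weights

section qBinom

variable (q : ℂ)

@[simp] lemma qBinom_zero_right (n : ℕ) : qBinom q n 0 = 1 := by cases n <;> rfl

lemma qBinom_succ_succ (n k : ℕ) :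
    qBinom q (n + 1) (k + 1) = qBinom q n k + q ^ (k + 1) * qBinom q n (k + 1) := rfl

lemma qBinom_eq_zero_of_lt {n k : ℕ} (h : n < k) : qBinom q n k = 0 := by
  induction n generalizing k with
  | zero => obtain ⟨k, rfl⟩ := Nat.exists_eq_succ_of_ne_zero h.ne'; rfl
  | succ n ih =>
    obtain ⟨k, rfl⟩ := Nat.exists_eq_succ_of_ne_zero (by omega : k ≠ 0)
    rw [qBinom_succ_succ, ih (by omega), ih (by omega), mul_zero, add_zero]

@[simp] lemma qBinom_self (n : ℕ) : qBinom q n n = 1 := by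
  induction n with
  | zero => rfl
  | succ n ih =>
    rw [qBinom_succ_succ, ih, qBinom_eq_zero_of_lt q n.lt_succ_self, mul_zero, add_zero]

lemma qBinom_succ_succ' (n k : ℕ) :
    qBinom q (n + 1) (k + 1) = q ^ (n - k) * qBinom q n k + qBinom q n (k + 1) := by
  induction n generalizing k with
  | zero => cases k <;> simp [qBinom_eq_zero_of_lt]
  | succ n ih =>
    cases k with
    | zero =>
      have h := ih 0
      simp only [qBinom_succ_succ, qBinom_zero_right, Nat.sub_zero, zero_add, pow_one,
        mul_one] at h ⊢
      linear_combination q * h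
    | succ k =>
      conv_lhs => rw [qBinom_succ_succ q (n + 1), ih k, ih (k + 1)]
      rw [qBinom_succ_succ q n k, qBinom_succ_succ q n (k + 1)]
      rcases lt_or_ge k n with hk | hk
      · obtain ⟨r, rfl⟩ := Nat.exists_eq_add_of_lt hk
        rw [show k + r + 1 + 1 - (k + 1) = r + 1 by omega, show k + r + 1 - k = r + 1 by omega,
          show k + r + 1 - (k + 1) = r by omega]
        ring
      · rw [qBinom_eq_zero_of_lt q (by omega : n < k + 1), Nat.add_sub_add_right]
        ring

lemma qBinom_symm {n k : ℕ} (h : k ≤ n) : qBinom q n (n - k) = qBinom q n k := by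
  induction n generalizing k with
  | zero => rw [Nat.le_zero.1 h]
  | succ n ih =>
    rcases k with _ | k
    · simp
    rcases h.eq_or_lt with hk | hk
    · obtain rfl : k = n := by omega
      simp
    rw [show n + 1 - (k + 1) = (n - (k + 1)) + 1 by omega, qBinom_succ_succ, ih (by omega),
      show n - (k + 1) + 1 = n - k by omega, ih (by omega), qBinom_succ_succ']
    ring

lemma qBinom_inv (hq : q ≠ 0) (n k : ℕ) :
    qBinom q⁻¹ n k = (q ^ (k * (n - k)))⁻¹ * qBinom q n k := by
  induction n generalizing k with
  | zero => cases k <;> simp [qBinom_eq_zero_of_lt]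
  | succ n ih =>
    rcases k with _ | k
    · simp
    rw [qBinom_succ_succ, ih, ih, qBinom_succ_succ']
    rcases lt_or_ge k n with hk | hk
    · obtain ⟨r, rfl⟩ := Nat.exists_eq_add_of_lt hk
      rw [show k + r + 1 + 1 - (k + 1) = r + 1 by omega, show k + r + 1 - k = r + 1 by omega,
        show k + r + 1 - (k + 1) = r by omega]
      simp only [inv_pow]
      field_simp
      ring
    · rw [qBinom_eq_zero_of_lt q (by omega : n < k + 1), Nat.sub_eq_zero_of_le hk,
        Nat.sub_eq_zero_of_le (by omega : n + 1 ≤ k + 1)]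
      simp

end qBinom

section qAltBinom

variable (q : ℂ)

/-- The coefficient of `x ^ j` in `∏ i < a, (1 - q ^ i * x)`. -/
noncomputable def qAltBinom (a j : ℕ) : ℂ := (-1) ^ j * q ^ j.choose 2 * qBinom q a j

@[simp] lemma qAltBinom_zero_right (a : ℕ) : qAltBinom q a 0 = 1 := by simp [qAltBinom]

lemma qAltBinom_eq_zero_of_lt {a j : ℕ} (h : a < j) : qAltBinom q a j = 0 := by
  simp [qAltBinom, qBinom_eq_zero_of_lt q h]

lemma qAltBinom_succ_succ (a j : ℕ) :
    qAltBinom q (a + 1) (j + 1)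
      = q ^ (j + 1) * qAltBinom q a (j + 1) - q ^ j * qAltBinom q a j := by
  simp only [qAltBinom, qBinom_succ_succ, Nat.choose_succ_succ' j, Nat.choose_one_right]
  ring

lemma sum_qAltBinom_succ_mul {a N : ℕ} (h : a < N) (f : ℕ → ℂ) :
    ∑ j ∈ range (N + 1), qAltBinom q (a + 1) j * f j
      = ∑ j ∈ range (N + 1), q ^ j * qAltBinom q a j * (f j - f (j + 1)) := by
  have hshift := sum_range_succ' (fun j => q ^ j * qAltBinom q a j * f j) N
  have htop := sum_range_succ (fun j => q ^ j * qAltBinom q a j * f (j + 1)) N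
  rw [qAltBinom_eq_zero_of_lt q h, mul_zero, zero_mul, add_zero] at htop
  simp only [mul_sub, sum_sub_distrib, hshift, htop, pow_zero, one_mul, qAltBinom_zero_right]
  rw [sum_range_succ']
  simp only [qAltBinom_succ_succ, sub_mul, sum_sub_distrib, qAltBinom_zero_right, mul_assoc]
  ring

lemma sum_qAltBinom_mul_qBinom {a N m : ℕ} (ha : a ≤ N) (hm : m ≤ N) :
    ∑ j ∈ range (N + 1), qAltBinom q a j * qBinom q (N - j) m
      = q ^ (a * (N - m)) * qBinom q (N - a) (N - m) := by
  induction a generalizing N m with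
  | zero =>
    rw [sum_eq_single_of_mem 0 (by simp) fun j _ hj => by
      rw [qAltBinom_eq_zero_of_lt q (Nat.pos_of_ne_zero hj), zero_mul]]
    simp [qBinom_symm q hm]
  | succ a ih =>
    obtain ⟨N, rfl⟩ := Nat.exists_eq_add_of_lt ha
    rw [sum_qAltBinom_succ_mul q (by omega), sum_range_succ,
      qAltBinom_eq_zero_of_lt q (by omega : a < a + N + 1), mul_zero, zero_mul, add_zero]
    rcases m with _ | m
    · rw [qBinom_eq_zero_of_lt q (by omega)]
      simp
    have hterm : ∀ j ∈ range (a + N + 1), q ^ j * qAltBinom q a j *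
        (qBinom q (a + N + 1 - j) (m + 1) - qBinom q (a + N + 1 - (j + 1)) (m + 1))
          = q ^ (a + N - m) * (qAltBinom q a j * qBinom q (a + N - j) m) := by
      intro j hj
      rw [mem_range] at hj
      rw [show a + N + 1 - j = a + N - j + 1 by omega, Nat.add_sub_add_right,
        qBinom_succ_succ', add_sub_cancel_right]
      rcases le_or_gt m (a + N - j) with hmj | hmj
      · rw [show a + N - m = j + (a + N - j - m) by omega, pow_add]
        ring
      · rw [qBinom_eq_zero_of_lt q hmj]
        ring
    rw [sum_congr rfl hterm, ← mul_sum, ih (by omega) (by omega)]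
    simp only [Nat.add_sub_add_right]
    ring

end qAltBinom

section Matrices

open Matrix

variable (q : ℂ) (n : ℕ)

noncomputable def qPascal : Matrix (Fin (n + 1)) (Fin (n + 1)) ℂ :=
  of fun k m => qBinom q k m

noncomputable def qPascalInv : Matrix (Fin (n + 1)) (Fin (n + 1)) ℂ :=
  of fun k m => (-1) ^ ((k : ℕ) + m) * q ^ ((k : ℕ) - m).choose 2 * qBinom q k m

noncomputable def twist : Matrix (Fin (n + 1)) (Fin (n + 1)) ℂ :=
  diagonal fun k => (-1) ^ (k : ℕ) * q ^ (-((k : ℕ).choose 2 : ℤ))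

noncomputable def twistInv : Matrix (Fin (n + 1)) (Fin (n + 1)) ℂ :=
  diagonal fun k => (-1) ^ (k : ℕ) * q ^ (k : ℕ).choose 2

noncomputable def qLambda : Matrix (Fin (n + 1)) (Fin (n + 1)) ℂ :=
  diagonal fun r => q ^ (-(((n - r.val) * r.val : ℕ) : ℤ))

lemma qPascalInv_mul_qPascal : qPascalInv q n * qPascal q n = 1 := by
  ext k m
  simp only [mul_apply, one_apply, qPascalInv, qPascal, of_apply, Fin.ext_iff]
  rw [Fin.sum_univ_eq_sum_range
    (fun j => (-1) ^ ((k : ℕ) + j) * q ^ ((k : ℕ) - j).choose 2 * qBinom q k j * qBinom q j m)]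
  rcases lt_or_ge (k : ℕ) m with hkm | hmk
  · rw [if_neg hkm.ne]
    refine sum_eq_zero fun j _ => ?_
    rcases le_or_gt j k with hj | hj
    · rw [qBinom_eq_zero_of_lt q (hj.trans_lt hkm), mul_zero]
    · rw [qBinom_eq_zero_of_lt q hj, mul_zero, zero_mul]
  rw [← sum_subset (range_subset_range.2 (by omega : (k : ℕ) + 1 ≤ n + 1)) fun j _ hj => by
    rw [qBinom_eq_zero_of_lt q (by simpa using hj), mul_zero, zero_mul], ← sum_range_reflect]
  have hterm : ∀ i ∈ range ((k : ℕ) + 1),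
      (-1) ^ ((k : ℕ) + ((k : ℕ) + 1 - 1 - i)) * q ^ ((k : ℕ) - ((k : ℕ) + 1 - 1 - i)).choose 2
        * qBinom q k ((k : ℕ) + 1 - 1 - i) * qBinom q ((k : ℕ) + 1 - 1 - i) m
        = qAltBinom q k i * qBinom q (k - i) m := by
    intro i hi
    have hi : i ≤ k := Nat.lt_succ_iff.1 (mem_range.1 hi)
    rw [Nat.add_sub_cancel, qBinom_symm q hi, Nat.sub_sub_self hi,
      show (k : ℕ) + (k - i) = i + 2 * (k - i) by omega, pow_add, pow_mul, neg_one_sq, one_pow,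
      qAltBinom]
    ring
  rw [sum_congr rfl hterm, sum_qAltBinom_mul_qBinom q le_rfl hmk, Nat.sub_self]
  rcases hmk.eq_or_lt with h | h
  · simp [h]
  · rw [if_neg h.ne', qBinom_eq_zero_of_lt q (by omega), mul_zero]

lemma qPascal_mul_qPascalInv : qPascal q n * qPascalInv q n = 1 :=
  mul_eq_one_comm.1 (qPascalInv_mul_qPascal q n)

variable {q}

lemma twist_mul_twistInv (hq : q ≠ 0) : twist q n * twistInv q n = 1 := by
  rw [twist, twistInv, diagonal_mul_diagonal, ← diagonal_one]
  congr 1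
  funext k
  rw [mul_mul_mul_comm, neg_one_pow_mul_self, one_mul, _root_.zpow_neg, zpow_natCast,
    inv_mul_cancel₀ (pow_ne_zero _ hq)]

lemma twistInv_mul_twist (hq : q ≠ 0) : twistInv q n * twist q n = 1 :=
  mul_eq_one_comm.1 (twist_mul_twistInv n hq)

lemma sigma2_eq_twist_mul_qPascal_mul_twistInv (hq : q ≠ 0) :
    sigma2 q n = twist q n * qPascal q n * twistInv q n := by
  ext k m
  simp only [sigma2, twist, twistInv, qPascal, diagonal_mul, mul_diagonal, of_apply]
  split_ifs with h
  · obtain ⟨r, hr⟩ := Nat.exists_eq_add_of_le h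
    have hpow : (q ^ r.choose 2)⁻¹ * (q ^ ((m : ℕ) * r))⁻¹
        = (q ^ ((m : ℕ) + r).choose 2)⁻¹ * q ^ (m : ℕ).choose 2 := by
      rw [Nat.choose_two_add]
      field_simp
      ring
    rw [hr, Nat.add_sub_cancel_left, ← Nat.choose_two_right, qBinom_inv q hq,
      Nat.add_sub_cancel_left]
    simp only [_root_.zpow_neg, zpow_natCast]
    linear_combination (-1 : ℂ) ^ ((m : ℕ) + r + m) * qBinom q (m + r) m * hpow
  · rw [qBinom_eq_zero_of_lt q (not_le.1 h)]
    ring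

lemma sigma1_eq_submatrix_qPascal :
    sigma1 q n = (qPascal q n).submatrix Fin.revPerm Fin.revPerm := by
  ext k m
  simp [sigma1, qPascal, Fin.val_rev]

lemma Smat_eq_submatrix_twist : Smat q n = (twist q n).submatrix id Fin.revPerm := by
  ext k m
  simp only [Smat, twist, submatrix_apply, id, Fin.revPerm_apply, diagonal_apply, Fin.ext_iff,
    Fin.val_rev, ← Nat.choose_two_right]
  congr 1
  apply propext
  omega

end Matrices

section Braid

open Matrix

variable {q : ℂ} {n : ℕ}

lemma sigma1_mul_qLambda_mul_twist_mul_qPascal (hq : q ≠ 0) :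
    sigma1 q n * qLambda q n * twist q n * qPascal q n
      = (twist q n * qPascalInv q n).submatrix id Fin.revPerm * twist q n := by
  ext k m
  have hk := k.is_le
  have hm := m.is_le
  have hterm : ∀ j : Fin (n + 1), (sigma1 q n * qLambda q n * twist q n) k j * qPascal q n j m
      = (-1) ^ n * (q ^ n.choose 2)⁻¹
        * (qAltBinom q (n - k) (n - j) * qBinom q (n - (n - j)) m) := by
    intro j
    simp only [mul_diagonal, sigma1, qLambda, twist, qPascal, of_apply]
    rw [mul_assoc (qBinom q _ _), lambda_twist_weight hq, Nat.sub_add_cancel j.is_le,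
      Nat.sub_sub_self j.is_le, qAltBinom]
    ring
  have hreflect := sum_range_reflect (fun i => qAltBinom q (n - k) i * qBinom q (n - i) m) (n + 1)
  rw [Nat.add_sub_cancel] at hreflect
  rw [mul_apply, sum_congr rfl fun j _ => hterm j, ← mul_sum,
    Fin.sum_univ_eq_sum_range (fun j => qAltBinom q (n - k) (n - j) * qBinom q (n - (n - j)) m),
    hreflect, sum_qAltBinom_mul_qBinom q (Nat.sub_le n k) hm, Nat.sub_sub_self hk]
  simp only [mul_diagonal, submatrix_apply, id, Fin.revPerm_apply, diagonal_mul, twist,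
    qPascalInv, of_apply, Fin.val_rev, Nat.add_sub_add_right]
  rcases lt_or_ge (k : ℕ) (n - m) with h | h
  · simp [qBinom_eq_zero_of_lt q h]
  · linear_combination qBinom q k (n - m) * twist_qPascalInv_twist_weight hq hk hm (by omega)

lemma sigma2_mul_twist_mul_qPascalInv (hq : q ≠ 0) :
    sigma2 q n * (twist q n * qPascalInv q n) = twist q n := by
  rw [sigma2_eq_twist_mul_qPascal_mul_twistInv n hq, mul_assoc, mul_assoc,
    ← mul_assoc (twistInv q n), twistInv_mul_twist n hq, one_mul, qPascal_mul_qPascalInv, mul_one]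

lemma sigma1_mul_qLambda_mul_sigma2 (hq : q ≠ 0) :
    sigma1 q n * qLambda q n * sigma2 q n
      = (twist q n * qPascalInv q n).submatrix id Fin.revPerm := by
  rw [sigma2_eq_twist_mul_qPascal_mul_twistInv n hq, ← mul_assoc, ← mul_assoc,
    sigma1_mul_qLambda_mul_twist_mul_qPascal hq, mul_assoc, twist_mul_twistInv n hq, mul_one]

end Braid

/-- With `Λ(q) = diag(q^{-(n-r)r})_{r=0}^n`,
`σ₁(q,n) Λ(q) σ₂(q,n) σ₁(q,n) = S(q)` and `σ₂(q,n) σ₁(q,n) Λ(q) σ₂(q,n) = S(q)`. -/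
theorem braid_relation_canonical (n : ℕ) (q : ℂ) (hq : q ≠ 0)
    (Λq : Matrix (Fin (n + 1)) (Fin (n + 1)) ℂ)
    (hΛq : Λq = Matrix.diagonal (fun r : Fin (n + 1) => q ^ (-(((n - r.val) * r.val : ℕ) : ℤ)))) :
    sigma1 q n * Λq * sigma2 q n * sigma1 q n = Smat q n ∧
      sigma2 q n * (sigma1 q n * Λq * sigma2 q n) = Smat q n := by
  obtain rfl : Λq = qLambda q n := hΛq
  rw [sigma1_mul_qLambda_mul_sigma2 hq, Smat_eq_submatrix_twist]
  constructor
  · rw [sigma1_eq_submatrix_qPascal, Matrix.submatrix_mul_equiv, mul_assoc, qPascalInv_mul_qPascal,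
      mul_one]
  · rw [← Matrix.submatrix_id_id (sigma2 q n),
      ← Matrix.submatrix_mul _ _ _ _ _ Function.bijective_id, sigma2_mul_twist_mul_qPascalInv hq]
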